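/- The function u(x,t) = −t⁴/3 − 2tx − 12/(x − t³/3)² satisfies, at every point with x ≠ t³/3, both auxiliary equations −10t − 3u_x − 2t·u_xt − (5/3)t³·u_xx − x·u_xx = 0 and 2 + u_xt + t²·u_xx = 0. -/

import Mathlib

open Real

noncomputable def px (u : ℝ → ℝ → ℝ) (x t : ℝ) : ℝ := deriv (fun y => u y t) x
noncomputable def pt (u : ℝ → ℝ → ℝ) (x t : ℝ) : ℝ := deriv (fun s => u x s) t

/-!
Everything is a function of the similarity variable `ξ = x - t³/3`, with `ξ_x = 1` and
`ξ_t = -t²`. Hence `u_x = -2t + 24/ξ³`, `u_xx = -72/ξ⁴` and `u_xt = -2 + 72t²/ξ⁴`, and both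
equations reduce to identities in `x`, `t`, `ξ` once `x = ξ + t³/3` is substituted.
-/

open Filter Topology

theorem HasDerivAt.const_div_pow {𝕜 : Type*} [NontriviallyNormedField 𝕜] {f : 𝕜 → 𝕜}
    {f' x : 𝕜} (hf : HasDerivAt f f' x) (hx : f x ≠ 0) (c : 𝕜) (n : ℕ) :
    HasDerivAt (fun y => c / f y ^ n) (-(n * c * f') / f x ^ (n + 1)) x := by
  refine ((hasDerivAt_const x c).div (hf.fun_pow n) (pow_ne_zero n hx)).congr_deriv ?_
  rcases n with _ | n
  · simp
  · rw [Nat.add_sub_cancel]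
    field_simp
    ring

namespace Boussinesq

noncomputable def ξ (x t : ℝ) : ℝ := x - t ^ 3 / 3

noncomputable def u (x t : ℝ) : ℝ := -t ^ 4 / 3 - 2 * t * x - 12 / ξ x t ^ 2

theorem hasDerivAt_ξ_x (x t : ℝ) : HasDerivAt (fun y => ξ y t) 1 x :=
  (hasDerivAt_id x).sub_const _

theorem hasDerivAt_ξ_t (x t : ℝ) : HasDerivAt (fun s => ξ x s) (-t ^ 2) t := by
  refine (((hasDerivAt_pow 3 t).div_const 3).const_sub x).congr_deriv ?_
  ring

theorem eventually_ξ_ne_x {x t : ℝ} (h : ξ x t ≠ 0) : ∀ᶠ y in 𝓝 x, ξ y t ≠ 0 :=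
  (hasDerivAt_ξ_x x t).continuousAt.eventually_ne h

theorem eventually_ξ_ne_t {x t : ℝ} (h : ξ x t ≠ 0) : ∀ᶠ s in 𝓝 t, ξ x s ≠ 0 :=
  (hasDerivAt_ξ_t x t).continuousAt.eventually_ne h

theorem px_u {x t : ℝ} (h : ξ x t ≠ 0) : px u x t = -2 * t + 24 / ξ x t ^ 3 := by
  have hlin : HasDerivAt (fun y => -t ^ 4 / 3 - 2 * t * y) (-2 * t) x := by
    simpa using ((hasDerivAt_id x).const_mul (2 * t)).const_sub (-t ^ 4 / 3)
  refine ((hlin.sub ((hasDerivAt_ξ_x x t).const_div_pow h 12 2)).congr_deriv ?_).deriv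
  ring

theorem px_px_u {x t : ℝ} (h : ξ x t ≠ 0) : px (px u) x t = -72 / ξ x t ^ 4 := by
  have hux : (fun y => px u y t) =ᶠ[𝓝 x] fun y => -2 * t + 24 / ξ y t ^ 3 :=
    (eventually_ξ_ne_x h).mono fun y hy => px_u hy
  have hderiv := ((hasDerivAt_ξ_x x t).const_div_pow h 24 3).const_add (-2 * t)
  refine ((hderiv.congr_of_eventuallyEq hux).congr_deriv ?_).deriv
  ring

theorem pt_px_u {x t : ℝ} (h : ξ x t ≠ 0) : pt (px u) x t = -2 + 72 * t ^ 2 / ξ x t ^ 4 := by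
  have hux : (fun s => px u x s) =ᶠ[𝓝 t] fun s => -2 * s + 24 / ξ x s ^ 3 :=
    (eventually_ξ_ne_t h).mono fun s hs => px_u hs
  have hderiv := ((hasDerivAt_id t).const_mul (-2)).add
    ((hasDerivAt_ξ_t x t).const_div_pow h 24 3)
  refine ((hderiv.congr_of_eventuallyEq hux).congr_deriv ?_).deriv
  ring

end Boussinesq

open Boussinesq in
theorem boussinesq_prolonged_eqs :
    ∀ x t : ℝ, x ≠ t ^ 3 / 3 →
      (let u : ℝ → ℝ → ℝ := fun x t => -t ^ 4 / 3 - 2 * t * x - 12 / (x - t ^ 3 / 3) ^ 2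
       (-10 * t - 3 * px u x t - 2 * t * pt (px u) x t
          - (5 / 3) * t ^ 3 * px (px u) x t - x * px (px u) x t = 0) ∧
       (2 + pt (px u) x t + t ^ 2 * px (px u) x t = 0)) := by
  intro x t hx
  have h : ξ x t ≠ 0 := sub_ne_zero.mpr hx
  show (-10 * t - 3 * px u x t - 2 * t * pt (px u) x t
      - (5 / 3) * t ^ 3 * px (px u) x t - x * px (px u) x t = 0) ∧
    (2 + pt (px u) x t + t ^ 2 * px (px u) x t = 0)
  rw [px_u h, px_px_u h, pt_px_u h]
  set d := ξ x t with hd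
  have hxd : x = d + t ^ 3 / 3 := by rw [hd, ξ]; ring
  clear_value d
  subst hxd
  constructor <;> field_simp <;> ring
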